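/- arXiv:2509.17016 — 4 statements merged into one kernel-verified Lean document; each statement's English description precedes it below -/
import Mathlib

section
/- For every complex n×n matrix A, if λ₁, …, λₙ is an enumeration (with multiplicity) of the roots of the characteristic polynomial of A, then det(A⊕A) = ∏_{i=1}^{n} ∏_{j=1}^{n} (λᵢ + λⱼ), where A⊕A := A⊗Iₙ + Iₙ⊗A is the Kronecker sum. -/
open Matrix Kronecker

open Polynomial Finset

def IsTri {n : ℕ} (A : Matrix (Fin n) (Fin n) ℂ) : Prop :=
  ∃ P Q : Matrix (Fin n) (Fin n) ℂ, P * Q = 1 ∧ (P * A * Q).BlockTriangular id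

lemma isTri_conj {n : ℕ} {A P Q : Matrix (Fin n) (Fin n) ℂ} (hPQ : P * Q = 1)
    (h : IsTri (P * A * Q)) : IsTri A := by
  obtain ⟨P', Q', h1, h2⟩ := h
  refine ⟨P' * P, Q * Q', ?_, ?_⟩
  · calc P' * P * (Q * Q') = P' * (P * Q) * Q' := by noncomm_ring
    _ = 1 := by rw [hPQ, mul_one, h1]
  · have : P' * P * A * (Q * Q') = P' * (P * A * Q) * Q' := by noncomm_ring
    rwa [this]

def finOneSum (n : ℕ) : Fin 1 ⊕ Fin n ≃ Fin (n + 1) where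
  toFun := Sum.elim (fun _ => 0) Fin.succ
  invFun := Fin.cases (Sum.inl 0) Sum.inr
  left_inv x := by
    cases x with
    | inl i => simp [Subsingleton.elim i 0]
    | inr j => simp
  right_inv x := by
    induction x using Fin.cases with
    | zero => simp
    | succ j => simp

lemma exists_isTri : ∀ (n : ℕ) (A : Matrix (Fin n) (Fin n) ℂ), IsTri A := by
  intro n
  induction n with
  | zero => exact fun A => ⟨1, 1, mul_one 1, fun i j _ => i.elim0⟩
  | succ n ih =>
    intro A
    -- eigenvalue
    obtain ⟨μ, hμ⟩ : ∃ z, A.charpoly.IsRoot z := by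
      apply Complex.exists_root
      rw [Matrix.charpoly_degree_eq_dim]
      simp only [Fintype.card_fin]
      exact_mod_cast Nat.succ_pos n
    -- eigenvector
    have hdet : (μ • (1 : Matrix (Fin (n+1)) (Fin (n+1)) ℂ) - A).det = 0 := by
      have h1 : (charmatrix A).map (evalRingHom μ) = μ • 1 - A := by
        ext i j
        by_cases hij : i = j
        · subst hij; simp [charmatrix_apply_eq]
        · simp [charmatrix_apply_ne _ _ _ hij, Matrix.one_apply_ne hij]
      have h2 := RingHom.map_det (evalRingHom μ) (charmatrix A)
      rw [show (evalRingHom μ).mapMatrix (charmatrix A) = (charmatrix A).map (evalRingHom μ) from rfl, h1] at h2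
      rw [← h2]
      exact hμ
    obtain ⟨v, hv0, hv⟩ := (Matrix.exists_mulVec_eq_zero_iff).2 hdet
    have hAv : A *ᵥ v = μ • v := by
      have := hv
      rw [sub_mulVec, smul_mulVec, one_mulVec, sub_eq_zero] at this
      exact this.symm
    obtain ⟨i, hi⟩ : ∃ i, v i ≠ 0 := Function.ne_iff.1 hv0
    -- key step, for eigenvector with nonzero 0-th coordinate
    have key : ∀ (B : Matrix (Fin (n+1)) (Fin (n+1)) ℂ) (w : Fin (n+1) → ℂ),
        w 0 ≠ 0 → B *ᵥ w = μ • w → IsTri B := by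
      intro B w hw0 hBw
      set P₁ : Matrix (Fin (n+1)) (Fin (n+1)) ℂ := (1 : Matrix _ _ ℂ).updateCol 0 w with hP₁
      have hdetP₁ : P₁.det = w 0 := by
        rw [hP₁, ← Matrix.cramer_apply, Matrix.cramer_one]
        rfl
      have hu : IsUnit P₁.det := by rw [hdetP₁]; exact Ne.isUnit hw0
      have hPQ1 : P₁⁻¹ * P₁ = 1 := Matrix.nonsing_inv_mul _ hu
      refine isTri_conj (P := P₁⁻¹) (Q := P₁) hPQ1 ?_
      set M := P₁⁻¹ * B * P₁ with hM
      have hcol : ∀ j : Fin (n+1), j ≠ 0 → M j 0 = 0 := by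
        have h1 : P₁ *ᵥ Pi.single 0 1 = w := by
          funext j
          rw [Matrix.mulVec_single]
          simp [hP₁, Matrix.updateCol_self]
        have h2 : M *ᵥ (Pi.single 0 1 : Fin (n+1) → ℂ) = μ • (Pi.single 0 1 : Fin (n+1) → ℂ) := by
          rw [hM, ← Matrix.mulVec_mulVec, ← Matrix.mulVec_mulVec, h1, hBw,
            Matrix.mulVec_smul, ← h1, Matrix.mulVec_mulVec, hPQ1, Matrix.one_mulVec]
        intro j hj
        have h3 := congrFun h2 j
        rw [Matrix.mulVec_single] at h3
        simpa [Pi.single_eq_of_ne hj, mul_one] using h3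
      -- block decomposition
      set e := finOneSum n with he
      set A₂ : Matrix (Fin n) (Fin n) ℂ :=
        Matrix.of (fun j k : Fin n => M (e (Sum.inr j)) (e (Sum.inr k))) with hA₂
      obtain ⟨p, q, hpq, hp⟩ := ih A₂
      set P₂ : Matrix (Fin 1 ⊕ Fin n) (Fin 1 ⊕ Fin n) ℂ := Matrix.fromBlocks 1 0 0 p with hP₂
      set Q₂ : Matrix (Fin 1 ⊕ Fin n) (Fin 1 ⊕ Fin n) ℂ := Matrix.fromBlocks 1 0 0 q with hQ₂
      set M' := M.submatrix e e with hM'def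
      have hM'21 : M'.toBlocks₂₁ = 0 := by
        ext j k
        have : e (Sum.inr j) ≠ 0 := by
          simp only [he, finOneSum, Equiv.coe_fn_mk, Sum.elim_inr]
          exact Fin.succ_ne_zero j
        simp only [Matrix.toBlocks₂₁, Matrix.of_apply, hM'def, Matrix.submatrix_apply]
        have h0 : e (Sum.inl k) = 0 := rfl
        rw [h0]
        simpa using hcol _ this
      have hM' : M' = Matrix.fromBlocks M'.toBlocks₁₁ M'.toBlocks₁₂ 0 M'.toBlocks₂₂ := by
        rw [← hM'21, Matrix.fromBlocks_toBlocks]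
      have hM'22 : M'.toBlocks₂₂ = A₂ := rfl
      have hprod : P₂ * M' * Q₂ =
          Matrix.fromBlocks M'.toBlocks₁₁ (M'.toBlocks₁₂ * q) 0 (p * A₂ * q) := by
        rw [hM', hP₂, hQ₂, Matrix.fromBlocks_multiply, Matrix.fromBlocks_multiply]
        rw [hM'22]
        congr 1 <;> simp
      -- triangularity over the sum type
      set bS : Fin 1 ⊕ Fin n → ℕ := Sum.elim (fun _ => 0) (fun j => (j : ℕ) + 1) with hbS
      have hN : (P₂ * M' * Q₂).BlockTriangular bS := by
        rw [hprod]
        rintro (a | a) (b | b) hab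
        · exact absurd hab (lt_irrefl _)
        · exact absurd hab (by simp [hbS])
        · simp [Matrix.fromBlocks_apply₂₁]
        · have : (b : ℕ) < (a : ℕ) := by simpa [hbS] using hab
          exact hp (show (id b : Fin n) < id a from this)
      have hval : ∀ x : Fin (n+1), bS (e.symm x) = (x : ℕ) := by
        intro x
        induction x using Fin.cases with
        | zero => rfl
        | succ j => rfl
      refine ⟨P₂.submatrix e.symm e.symm, Q₂.submatrix e.symm e.symm, ?_, ?_⟩
      · rw [Matrix.submatrix_mul_equiv]
        have : P₂ * Q₂ = 1 := by
          rw [hP₂, hQ₂, Matrix.fromBlocks_multiply]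
          simpa [hpq] using Matrix.fromBlocks_one
        rw [this, Matrix.submatrix_one_equiv]
      · have hMM : M = M'.submatrix e.symm e.symm := by
          rw [hM'def, Matrix.submatrix_submatrix]
          simp
        have hre : P₂.submatrix e.symm e.symm * M * Q₂.submatrix e.symm e.symm =
            (P₂ * M' * Q₂).submatrix e.symm e.symm := by
          rw [hMM, Matrix.submatrix_mul_equiv, Matrix.submatrix_mul_equiv]
        rw [hre]
        intro x y hxy
        exact (hN.submatrix) (by rw [Function.comp, Function.comp, hval, hval]; exact hxy)
    -- apply key to permuted matrix
    set σ := Equiv.swap (0 : Fin (n+1)) i with hσ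
    have hswap : (1 : Matrix (Fin (n+1)) (Fin (n+1)) ℂ).submatrix σ id *
        (1 : Matrix (Fin (n+1)) (Fin (n+1)) ℂ).submatrix id σ = 1 := by
      ext a b
      simp [Matrix.mul_apply, Matrix.one_apply, Equiv.eq_symm_apply]
    have hsub : (1 : Matrix (Fin (n+1)) (Fin (n+1)) ℂ).submatrix σ id * A *
        (1 : Matrix (Fin (n+1)) (Fin (n+1)) ℂ).submatrix id σ = A.submatrix σ σ := by
      ext a b
      simp [Matrix.mul_apply, Matrix.one_apply]
    refine isTri_conj (P := (1 : Matrix (Fin (n+1)) (Fin (n+1)) ℂ).submatrix σ id)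
      (Q := (1 : Matrix (Fin (n+1)) (Fin (n+1)) ℂ).submatrix id σ) hswap ?_
    rw [hsub]
    have hmv : (A.submatrix σ σ) *ᵥ (v ∘ σ) = μ • (v ∘ σ) := by
      rw [Matrix.submatrix_mulVec_equiv]
      have hvs : (v ∘ ⇑σ) ∘ ⇑σ.symm = v := by funext x; simp
      rw [hvs, hAv]
      rfl
    exact key _ _ (by simpa [hσ, Equiv.swap_apply_left] using hi) hmv

lemma charpoly_conj {n : ℕ} (P Q A : Matrix (Fin n) (Fin n) ℂ) (hPQ : P * Q = 1) :
    (P * A * Q).charpoly = A.charpoly := by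
  have key : charmatrix (P * A * Q) =
      (P.map C) * charmatrix A * (Q.map C) := by
    rw [charmatrix, charmatrix]
    rw [mul_sub, sub_mul]
    congr 1
    · have h1 : (P.map (C : ℂ →+* ℂ[X])) * Matrix.scalar (Fin n) (X : ℂ[X]) =
          Matrix.scalar (Fin n) (X : ℂ[X]) * P.map C :=
        (Matrix.scalar_commute (X : ℂ[X]) (fun r' => Commute.all _ _) _).symm
      rw [h1, mul_assoc, show (P.map (C : ℂ →+* ℂ[X])) * Q.map C = 1 by
        rw [← Matrix.map_mul, hPQ, Matrix.map_one _ (map_zero C) (map_one C)], mul_one]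
    · show (C : ℂ →+* ℂ[X]).mapMatrix (P * A * Q) = _
      rw [_root_.map_mul, _root_.map_mul]
      rfl
  rw [Matrix.charpoly, Matrix.charpoly, key, Matrix.det_mul, Matrix.det_mul]
  have : (P.map (C : ℂ →+* ℂ[X])).det * (Q.map C).det = 1 := by
    rw [← Matrix.det_mul, ← Matrix.map_mul, hPQ, Matrix.map_one _ (map_zero C) (map_one C),
      Matrix.det_one]
  calc (P.map (C : ℂ →+* ℂ[X])).det * (charmatrix A).det * (Q.map C).det
      = (P.map (C : ℂ →+* ℂ[X])).det * (Q.map C).det * (charmatrix A).det := by ring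
    _ = (charmatrix A).det := by rw [this, one_mul]

lemma prod_prod_add_eq {n : ℕ} (d lam : Fin n → ℂ)
    (h : Multiset.map d Finset.univ.val = Multiset.map lam Finset.univ.val) :
    ∏ i : Fin n, ∏ j : Fin n, (d i + d j) = ∏ i : Fin n, ∏ j : Fin n, (lam i + lam j) := by
  have key : ∀ f : Fin n → ℂ, (∏ i : Fin n, ∏ j : Fin n, (f i + f j)) =
      (Multiset.map (fun x => (Multiset.map (fun y => x + y)
        (Multiset.map f Finset.univ.val)).prod) (Multiset.map f Finset.univ.val)).prod := by
    intro f
    rw [Finset.prod_eq_multiset_prod, Multiset.map_map]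
    congr 1
    apply Multiset.map_congr rfl
    intro i _
    rw [Function.comp_apply, Finset.prod_eq_multiset_prod, Multiset.map_map]
    rfl
  rw [key d, key lam, h]

/-- If `λ₁, …, λₙ` enumerates (with multiplicity) the roots of the characteristic
polynomial of a complex `n × n` matrix `A`, then
`det(A ⊕ A) = ∏ᵢ ∏ⱼ (λᵢ + λⱼ)`, where `A ⊕ A := A ⊗ Iₙ + Iₙ ⊗ A`. -/
theorem det_kroneckerSum_eq_prod (n : ℕ) (A : Matrix (Fin n) (Fin n) ℂ)
    (lam : Fin n → ℂ)
    (h : A.charpoly.roots = Multiset.map lam Finset.univ.val) :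
    (A ⊗ₖ (1 : Matrix (Fin n) (Fin n) ℂ) + (1 : Matrix (Fin n) (Fin n) ℂ) ⊗ₖ A).det =
      ∏ i : Fin n, ∏ j : Fin n, (lam i + lam j) := by
  obtain ⟨P, Q, hPQ, hT⟩ := exists_isTri n A
  set T := P * A * Q with hTdef
  set d : Fin n → ℂ := fun i => T i i with hd
  have hchar : T.charpoly = A.charpoly := charpoly_conj P Q A hPQ
  have hTchar : T.charpoly = ∏ i : Fin n, (X - C (d i)) :=
    Matrix.charpoly_of_upperTriangular T hT
  have hroots : Multiset.map d Finset.univ.val = Multiset.map lam Finset.univ.val := by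
    have h1 : A.charpoly.roots = Multiset.map d Finset.univ.val := by
      rw [← hchar, hTchar]
      have h2 : (∏ i : Fin n, (X - C (d i))) =
          ((Multiset.map d Finset.univ.val).map (fun a => X - C a)).prod := by
        rw [Finset.prod_eq_multiset_prod, Multiset.map_map]
        rfl
      rw [h2, Polynomial.roots_multiset_prod_X_sub_C]
    rw [← h1, h]
  set KA := A ⊗ₖ (1 : Matrix (Fin n) (Fin n) ℂ) + (1 : Matrix (Fin n) (Fin n) ℂ) ⊗ₖ A with hKA
  set KT := T ⊗ₖ (1 : Matrix (Fin n) (Fin n) ℂ) + (1 : Matrix (Fin n) (Fin n) ℂ) ⊗ₖ T with hKT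
  have e1 : (P ⊗ₖ P) * (A ⊗ₖ (1 : Matrix (Fin n) (Fin n) ℂ)) * (Q ⊗ₖ Q)
      = T ⊗ₖ (1 : Matrix (Fin n) (Fin n) ℂ) := by
    rw [← Matrix.mul_kronecker_mul, ← Matrix.mul_kronecker_mul, Matrix.mul_one, hPQ, ← hTdef]
  have e2 : (P ⊗ₖ P) * ((1 : Matrix (Fin n) (Fin n) ℂ) ⊗ₖ A) * (Q ⊗ₖ Q)
      = (1 : Matrix (Fin n) (Fin n) ℂ) ⊗ₖ T := by
    rw [← Matrix.mul_kronecker_mul, ← Matrix.mul_kronecker_mul, Matrix.mul_one, hPQ, ← hTdef]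
  have hconj : (P ⊗ₖ P) * KA * (Q ⊗ₖ Q) = KT := by
    rw [hKA, hKT, mul_add, add_mul, e1, e2]
  have hdet1 : (P ⊗ₖ P).det * (Q ⊗ₖ Q).det = 1 := by
    rw [← Matrix.det_mul, ← Matrix.mul_kronecker_mul, hPQ, Matrix.one_kronecker_one,
      Matrix.det_one]
  have hdetconj : KA.det = KT.det := by
    rw [← hconj, Matrix.det_mul, Matrix.det_mul, mul_comm ((P ⊗ₖ P).det) KA.det,
      mul_assoc, hdet1, mul_one]
  -- block triangularity of KT
  have hbt : KT.BlockTriangular (fun p : Fin n × Fin n => ((finProdFinEquiv p : Fin (n*n)) : ℕ)) := by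
    intro p q hpq
    have hpq' : (q.2 : ℕ) + n * (q.1 : ℕ) < (p.2 : ℕ) + n * (p.1 : ℕ) := hpq
    have h1 : T p.1 q.1 * (1 : Matrix (Fin n) (Fin n) ℂ) p.2 q.2 = 0 := by
      by_cases h2 : p.2 = q.2
      · have hv2 : (p.2 : ℕ) = (q.2 : ℕ) := by rw [h2]
        have h3 : (q.1 : Fin n) < p.1 := by
          rcases lt_or_ge q.1 p.1 with h' | h'
          · exact h'
          · exfalso
            have hmul : n * (p.1 : ℕ) ≤ n * (q.1 : ℕ) :=
              Nat.mul_le_mul_left n (Fin.le_def.1 h')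
            have hle' : (p.2 : ℕ) + n * (p.1 : ℕ) ≤ (q.2 : ℕ) + n * (q.1 : ℕ) := by
              rw [hv2]; exact Nat.add_le_add_left hmul _
            exact absurd hpq' (not_lt.mpr hle')
        rw [hT h3, zero_mul]
      · rw [Matrix.one_apply_ne h2, mul_zero]
    have h4 : (1 : Matrix (Fin n) (Fin n) ℂ) p.1 q.1 * T p.2 q.2 = 0 := by
      by_cases h2 : p.1 = q.1
      · have hv1 : (p.1 : ℕ) = (q.1 : ℕ) := by rw [h2]
        have h3 : (q.2 : Fin n) < p.2 := by
          rcases lt_or_ge q.2 p.2 with h' | h'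
          · exact h'
          · exfalso
            have hle' : (p.2 : ℕ) + n * (p.1 : ℕ) ≤ (q.2 : ℕ) + n * (q.1 : ℕ) := by
              rw [hv1]; exact Nat.add_le_add_right (Fin.le_def.1 h') _
            exact absurd hpq' (not_lt.mpr hle')
        rw [hT h3, mul_zero]
      · rw [Matrix.one_apply_ne h2, zero_mul]
    rw [hKT]
    show (T ⊗ₖ (1 : Matrix (Fin n) (Fin n) ℂ)) p q
      + ((1 : Matrix (Fin n) (Fin n) ℂ) ⊗ₖ T) p q = 0
    rw [Matrix.kroneckerMap_apply, Matrix.kroneckerMap_apply, h1, h4, add_zero]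
  have hdetKT : KT.det = ∏ p : Fin n × Fin n, (d p.1 + d p.2) := by
    rw [← Matrix.det_submatrix_equiv_self finProdFinEquiv.symm KT]
    have hS : (KT.submatrix finProdFinEquiv.symm finProdFinEquiv.symm).BlockTriangular id := by
      intro x y hxy
      refine hbt.submatrix ?_
      show ((finProdFinEquiv (finProdFinEquiv.symm y) : Fin (n*n)) : ℕ) <
        ((finProdFinEquiv (finProdFinEquiv.symm x) : Fin (n*n)) : ℕ)
      rw [Equiv.apply_symm_apply, Equiv.apply_symm_apply]
      exact hxy
    rw [Matrix.det_of_upperTriangular hS]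
    rw [show (∏ k : Fin (n*n), (KT.submatrix finProdFinEquiv.symm finProdFinEquiv.symm) k k)
        = ∏ k : Fin (n*n), (fun p : Fin n × Fin n => KT p p) (finProdFinEquiv.symm k) from rfl]
    rw [Equiv.prod_comp finProdFinEquiv.symm (fun p : Fin n × Fin n => KT p p)]
    apply Finset.prod_congr rfl
    intro p _
    rw [hKT]
    show (T ⊗ₖ (1 : Matrix (Fin n) (Fin n) ℂ)) p p
      + ((1 : Matrix (Fin n) (Fin n) ℂ) ⊗ₖ T) p p = d p.1 + d p.2
    rw [Matrix.kroneckerMap_apply, Matrix.kroneckerMap_apply, Matrix.one_apply_eq,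
      Matrix.one_apply_eq, mul_one, one_mul]
  rw [hdetconj, hdetKT, ← prod_prod_add_eq d lam hroots]
  rw [← Finset.univ_product_univ, Finset.prod_product]
end

section
/- The map A ↦ det(A⊕A) is a guardian map for Hurwitz stability: for every real n×n matrix A, (i) if every complex eigenvalue of A has negative real part, then det(A⊕A) ≠ 0; and (ii) if A has a complex eigenvalue with zero real part, then det(A⊕A) = 0. Here A⊕A := A⊗Iₙ + Iₙ⊗A is the Kronecker sum and the determinant is of the associated n²×n² real matrix. -/
/-!
Vectorising `X ↦ vec X` turns the Kronecker sum `A ⊕ B` into the Sylvester operator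
`X ↦ B X + X Aᵀ`, so `det (A ⊕ B) = 0` exactly when `B X = X (-Aᵀ)` has a nonzero solution.
Over an algebraically closed field this happens iff `A` and `B` have eigenvalues `a`, `b` with
`a + b = 0`: a rank-one `X = w vᵀ` built from eigenvectors gives a solution, and conversely
`χ_B(B) X = X χ_B(-Aᵀ)` with `χ_B(B) = 0` by Cayley–Hamilton, while `χ_B(-Aᵀ)` is invertible when
`σ(B)` and `σ(-A)` are disjoint. For a real `A`, two eigenvalues of negative real part never sum
to `0`, whereas an eigenvalue `z` on the imaginary axis pairs with its conjugate `z̄ = -z`.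
-/

open Matrix Kronecker Polynomial

theorem spectrum.isUnit_aeval_of_forall_not_isRoot {K A : Type*} [Field K] [IsAlgClosed K]
    [Ring A] [Algebra K A] {a : A} {p : K[X]} (hp : p.Monic)
    (h : ∀ k ∈ spectrum K a, ¬ p.IsRoot k) : IsUnit (aeval a p) := by
  by_contra hu
  rw [(IsAlgClosed.splits p).eq_prod_roots_of_monic hp] at hu
  obtain ⟨k, hk, hroot⟩ := exists_mem_of_not_isUnit_aeval_prod hu
  exact h k hk hroot

namespace Matrix

section KroneckerSum

variable {m n R : Type*} [DecidableEq m] [DecidableEq n]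

def kroneckerSum [CommSemiring R] (A : Matrix m m R) (B : Matrix n n R) :
    Matrix (m × n) (m × n) R :=
  A ⊗ₖ (1 : Matrix n n R) + (1 : Matrix m m R) ⊗ₖ B

theorem kroneckerSum_map {S : Type*} [CommSemiring R] [CommSemiring S] (f : R →+* S)
    (A : Matrix m m R) (B : Matrix n n R) :
    (kroneckerSum A B).map f = kroneckerSum (A.map f) (B.map f) := by
  ext ⟨i, j⟩ ⟨k, l⟩
  simp [kroneckerSum, one_apply, apply_ite f]

variable [Fintype m] [Fintype n]

theorem kroneckerSum_mulVec_vec [CommSemiring R] (A : Matrix m m R) (B : Matrix n n R)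
    (X : Matrix n m R) : kroneckerSum A B *ᵥ vec X = vec (B * X + X * Aᵀ) := by
  rw [kroneckerSum, add_mulVec, kronecker_mulVec_vec, kronecker_mulVec_vec, vec_add,
    transpose_one, Matrix.mul_one, Matrix.one_mul, add_comm]

theorem det_kroneckerSum_eq_zero_iff_exists_mul_add_mul_eq_zero [CommRing R] [IsDomain R]
    (A : Matrix m m R) (B : Matrix n n R) :
    (kroneckerSum A B).det = 0 ↔ ∃ X : Matrix n m R, X ≠ 0 ∧ B * X + X * Aᵀ = 0 := by
  rw [← exists_mulVec_eq_zero_iff, vec_bijective.surjective.exists]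
  simp only [kroneckerSum_mulVec_vec, Ne, vec_eq_zero_iff]

end KroneckerSum

section Intertwining

variable {m n R : Type*} [Fintype m] [DecidableEq m] [Fintype n] [DecidableEq n]

theorem pow_mul_eq_mul_pow [Semiring R] {M : Matrix m m R} {N : Matrix n n R}
    {X : Matrix m n R} (h : M * X = X * N) (k : ℕ) : M ^ k * X = X * N ^ k := by
  induction k with
  | zero => simp
  | succ k ih =>
    rw [pow_succ, Matrix.mul_assoc, h, ← Matrix.mul_assoc, ih, Matrix.mul_assoc, ← pow_succ]

theorem aeval_mul_eq_mul_aeval [CommSemiring R] {M : Matrix m m R} {N : Matrix n n R}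
    {X : Matrix m n R} (h : M * X = X * N) (p : R[X]) : aeval M p * X = X * aeval N p := by
  induction p using Polynomial.induction_on' with
  | add p q hp hq => rw [map_add, map_add, Matrix.add_mul, Matrix.mul_add, hp, hq]
  | monomial k a =>
    rw [aeval_monomial, aeval_monomial, ← Algebra.smul_def, ← Algebra.smul_def,
      Matrix.smul_mul, Matrix.mul_smul, pow_mul_eq_mul_pow h]

end Intertwining

section Spectrum

variable {m n K : Type*} [Fintype m] [DecidableEq m] [Fintype n] [DecidableEq n] [Field K]

theorem spectrum_transpose (M : Matrix n n K) : spectrum K Mᵀ = spectrum K M := by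
  ext μ
  rw [mem_spectrum_iff_isRoot_charpoly, mem_spectrum_iff_isRoot_charpoly, charpoly_transpose]

theorem exists_mulVec_eq_smul_of_mem_spectrum {M : Matrix n n K} {μ : K}
    (hμ : μ ∈ spectrum K M) : ∃ v ≠ 0, M *ᵥ v = μ • v := by
  rw [← spectrum_toLin', ← Module.End.hasEigenvalue_iff_mem_spectrum] at hμ
  obtain ⟨v, hv⟩ := hμ.exists_hasEigenvector
  exact ⟨v, hv.2, by simpa using hv.apply_eq_smul⟩

theorem eq_zero_of_mul_eq_mul_of_disjoint_spectrum [IsAlgClosed K] {M : Matrix m m K}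
    {N : Matrix n n K} {X : Matrix m n K} (h : M * X = X * N)
    (hσ : Disjoint (spectrum K M) (spectrum K N)) : X = 0 := by
  have hunit : IsUnit (aeval N M.charpoly) :=
    spectrum.isUnit_aeval_of_forall_not_isRoot (charpoly_monic M) fun k hk hroot =>
      hσ.notMem_of_mem_right hk (mem_spectrum_iff_isRoot_charpoly.2 hroot)
  obtain ⟨P, hP⟩ := hunit.exists_right_inv
  calc X = X * aeval N M.charpoly * P := by rw [Matrix.mul_assoc, hP, Matrix.mul_one]
    _ = 0 := by
      rw [← aeval_mul_eq_mul_aeval h, aeval_self_charpoly, Matrix.zero_mul, Matrix.zero_mul]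

theorem det_kroneckerSum_eq_zero_iff [IsAlgClosed K] (A : Matrix m m K) (B : Matrix n n K) :
    (kroneckerSum A B).det = 0 ↔ ∃ a ∈ spectrum K A, ∃ b ∈ spectrum K B, a + b = 0 := by
  rw [det_kroneckerSum_eq_zero_iff_exists_mul_add_mul_eq_zero]
  constructor
  · rintro ⟨X, hX, hAB⟩
    by_contra! hσ
    refine hX (eq_zero_of_mul_eq_mul_of_disjoint_spectrum (M := B) (N := -Aᵀ) ?_ ?_)
    · rw [Matrix.mul_neg, ← add_eq_zero_iff_eq_neg, hAB]
    · rw [Set.disjoint_left, ← spectrum.neg_eq]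
      intro b hb hb'
      rw [Set.mem_neg, spectrum_transpose] at hb'
      exact hσ (-b) hb' b hb (neg_add_cancel b)
  · rintro ⟨a, ha, b, hb, hab⟩
    obtain ⟨v, hv, hAv⟩ := exists_mulVec_eq_smul_of_mem_spectrum ha
    obtain ⟨w, hw, hBw⟩ := exists_mulVec_eq_smul_of_mem_spectrum hb
    obtain ⟨i, hi⟩ := Function.ne_iff.1 hw
    obtain ⟨j, hj⟩ := Function.ne_iff.1 hv
    have hX : vecMulVec w v ≠ 0 := fun h0 =>
      mul_ne_zero hi hj (by simpa [vecMulVec_apply] using congrFun₂ h0 i j)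
    refine ⟨vecMulVec w v, hX, ?_⟩
    rw [mul_vecMulVec, vecMulVec_mul, vecMul_transpose, hAv, hBw, smul_vecMulVec, vecMulVec_smul,
      ← add_smul, add_comm, hab, zero_smul]

end Spectrum

theorem mem_spectrum_map_iff_isRoot_charpoly_map {n R K : Type*} [Fintype n] [DecidableEq n]
    [CommRing R] [Field K] (f : R →+* K) (A : Matrix n n R) (μ : K) :
    μ ∈ spectrum K (A.map f) ↔ (A.charpoly.map f).IsRoot μ := by
  rw [mem_spectrum_iff_isRoot_charpoly, charpoly_map]

theorem conj_mem_spectrum_map_algebraMap {n K : Type*} [Fintype n] [DecidableEq n] [RCLike K]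
    (A : Matrix n n ℝ) {z : K} (hz : z ∈ spectrum K (A.map (algebraMap ℝ K))) :
    starRingEnd K z ∈ spectrum K (A.map (algebraMap ℝ K)) := by
  rw [mem_spectrum_map_iff_isRoot_charpoly_map, IsRoot.def, eval_map_algebraMap] at hz ⊢
  rw [aeval_conj, hz, map_zero]

end Matrix

/-- `A ↦ det(A ⊕ A)` is a guardian map for Hurwitz stability: if every complex
eigenvalue of the real matrix `A` has negative real part then `det(A ⊕ A) ≠ 0`,
and if `A` has a complex eigenvalue with zero real part then `det(A ⊕ A) = 0`. -/
theorem det_kroneckerSum_guardian (n : ℕ) (A : Matrix (Fin n) (Fin n) ℝ) :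
    ((∀ z : ℂ, (A.charpoly.map (algebraMap ℝ ℂ)).IsRoot z → z.re < 0) →
      (A ⊗ₖ (1 : Matrix (Fin n) (Fin n) ℝ) + (1 : Matrix (Fin n) (Fin n) ℝ) ⊗ₖ A).det ≠ 0) ∧
    ((∃ z : ℂ, (A.charpoly.map (algebraMap ℝ ℂ)).IsRoot z ∧ z.re = 0) →
      (A ⊗ₖ (1 : Matrix (Fin n) (Fin n) ℝ) + (1 : Matrix (Fin n) (Fin n) ℝ) ⊗ₖ A).det = 0) := by
  set B := A.map (algebraMap ℝ ℂ)
  have hσ (z : ℂ) : (A.charpoly.map (algebraMap ℝ ℂ)).IsRoot z ↔ z ∈ spectrum ℂ B :=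
    (mem_spectrum_map_iff_isRoot_charpoly_map _ A z).symm
  have hdet : (kroneckerSum A A).det = 0 ↔ ∃ a ∈ spectrum ℂ B, ∃ b ∈ spectrum ℂ B, a + b = 0 := by
    rw [← det_kroneckerSum_eq_zero_iff, ← kroneckerSum_map, ← RingHom.mapMatrix_apply,
      ← RingHom.map_det, map_eq_zero]
  refine ⟨fun hstable hzero => ?_, fun ⟨z, hz, hre⟩ => ?_⟩
  · obtain ⟨a, ha, b, hb, hab⟩ := hdet.1 hzero
    have hre := congrArg Complex.re hab
    rw [Complex.add_re, Complex.zero_re] at hre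
    linarith [hstable a ((hσ a).2 ha), hstable b ((hσ b).2 hb)]
  · have hzB := (hσ z).1 hz
    refine hdet.2 ⟨z, hzB, starRingEnd ℂ z, conj_mem_spectrum_map_algebraMap A hzB, ?_⟩
    rw [Complex.add_conj, hre, mul_zero, Complex.ofReal_zero]
end

section
/- For a real n×n matrix A (n ≥ 2), let M(A) be the (n choose 2)×(n choose 2) matrix indexed by pairs (i,j) with i < j and (r,s) with r < s, with entries M(A)_{(i,j),(r,s)} := δ_{ir} A_{js} + δ_{js} A_{ir} − δ_{is} A_{jr} − δ_{jr} A_{is}. Then det(M(A)) is a guardian map in the weak sense: (i) if every complex eigenvalue of A has negative real part, then det(M(A)) ≠ 0; and (ii) if A has a purely imaginary nonzero eigenvalue iβ (β ∈ ℝ, β ≠ 0), then det(M(A)) = 0. -/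
open Matrix

/-- The bialternate sum of `A` with itself (equivalently, the second additive
compound of `A`): the `(n choose 2) × (n choose 2)` matrix indexed by pairs
`i < j` and `r < s` with entries
`δ_{ir} A_{js} + δ_{js} A_{ir} − δ_{is} A_{jr} − δ_{jr} A_{is}`. -/
def bialternateSum {n : ℕ} {R : Type*} [Ring R] (A : Matrix (Fin n) (Fin n) R) :
    Matrix {p : Fin n × Fin n // p.1 < p.2} {p : Fin n × Fin n // p.1 < p.2} R :=
  fun p q =>
    (if p.val.1 = q.val.1 then A p.val.2 q.val.2 else 0) +
      (if p.val.2 = q.val.2 then A p.val.1 q.val.1 else 0) -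
      (if p.val.1 = q.val.2 then A p.val.2 q.val.1 else 0) -
      (if p.val.2 = q.val.1 then A p.val.1 q.val.2 else 0)

/-!
Identify a vector indexed by the pairs `i < j` with the alternating matrix `W` having these
entries above the diagonal. Then `M(C)` acts as the Lyapunov operator `W ↦ C W + W Cᵀ`, so
`det M(C) = 0` iff `C W = W (-Cᵀ)` for some alternating `W ≠ 0`.

(i) The spectrum of `-Cᵀ` is `-σ(C)`, which misses `σ(C)` when every eigenvalue has negative
real part; Sylvester's argument (`χ_C(C) = 0` while `χ_C(-Cᵀ)` is invertible by spectral
mapping) then forces `W = 0`.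

(ii) A real matrix with eigenvalue `iβ` also has eigenvalue `-iβ`; for eigenvectors `x, y` of
these, `W = x yᵀ - y xᵀ` is a nonzero alternating solution.
-/

open Polynomial

theorem Fintype.sum_subtype_lt_add_swap {ι M : Type*} [LinearOrder ι] [Fintype ι]
    [AddCommMonoid M] (G : ι × ι → M) (hG : ∀ i, G (i, i) = 0) :
    ∑ q : {p : ι × ι // p.1 < p.2}, (G q + G q.1.swap) = ∑ p, G p := by
  classical
  have hsplit : ∀ p : ι × ι,
      G p = (if p.1 < p.2 then G p else 0) + (if p.2 < p.1 then G p else 0) := by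
    rintro ⟨i, j⟩
    rcases lt_trichotomy i j with h | rfl | h
    · simp [h, h.not_gt]
    · simp [hG]
    · simp [h, h.not_gt]
  rw [Finset.sum_add_distrib, Fintype.sum_congr _ _ hsplit, Finset.sum_add_distrib,
    ← Finset.sum_filter, ← Finset.sum_filter]
  congr 1
  · exact (Finset.sum_subtype _ (by simp) _).symm
  · rw [Finset.sum_subtype _ (p := fun p : ι × ι => p.2 < p.1) (fun _ => by simp)]
    exact Fintype.sum_equiv ((Equiv.prodComm ι ι).subtypeEquiv (by simp)) _ _ fun _ => rfl

theorem Polynomial.aeval_mul_eq_mul_aeval {R A : Type*} [CommSemiring R] [Semiring A]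
    [Algebra R A] {a b x : A} (h : a * x = x * b) (p : R[X]) :
    aeval a p * x = x * aeval b p := by
  have hpow : ∀ k : ℕ, a ^ k * x = x * b ^ k := by
    intro k
    induction k with
    | zero => simp
    | succ k ih => rw [pow_succ, pow_succ, mul_assoc, h, ← mul_assoc, ih, mul_assoc]
  induction p using Polynomial.induction_on' with
  | add p q hp hq => rw [map_add, map_add, add_mul, mul_add, hp, hq]
  | monomial k r =>
    rw [aeval_monomial, aeval_monomial, mul_assoc, hpow, ← mul_assoc, ← mul_assoc,
      Algebra.commutes]

namespace Matrix

section UpperEntries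

variable {ι R : Type*} [LinearOrder ι]

def upperEntries (W : Matrix ι ι R) : {p : ι × ι // p.1 < p.2} → R :=
  fun q => W q.1.1 q.1.2

def ofUpperEntries [Neg R] [Zero R] (v : {p : ι × ι // p.1 < p.2} → R) : Matrix ι ι R :=
  of fun i j => if h : i < j then v ⟨(i, j), h⟩ else if h : j < i then -v ⟨(j, i), h⟩ else 0

@[simp]
theorem upperEntries_ofUpperEntries [Neg R] [Zero R] (v : {p : ι × ι // p.1 < p.2} → R) :
    upperEntries (ofUpperEntries v) = v := by
  ext ⟨⟨i, j⟩, h⟩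
  simp [upperEntries, ofUpperEntries, h]

theorem transpose_ofUpperEntries [AddGroup R] (v : {p : ι × ι // p.1 < p.2} → R) :
    (ofUpperEntries v)ᵀ = -ofUpperEntries v := by
  ext i j
  rcases lt_trichotomy i j with h | rfl | h
  · simp [ofUpperEntries, h, h.not_gt]
  · simp [ofUpperEntries]
  · simp [ofUpperEntries, h, h.not_gt]

theorem ofUpperEntries_apply_self [Neg R] [Zero R] (v : {p : ι × ι // p.1 < p.2} → R)
    (i : ι) : ofUpperEntries v i i = 0 := by
  simp [ofUpperEntries]

theorem upperEntries_eq_zero_iff [AddGroup R] {W : Matrix ι ι R} (hW : Wᵀ = -W)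
    (hW₀ : ∀ i, W i i = 0) : upperEntries W = 0 ↔ W = 0 := by
  refine ⟨fun h => ?_, fun h => h ▸ rfl⟩
  ext i j
  rcases lt_trichotomy i j with hij | rfl | hij
  · exact congrFun h ⟨(i, j), hij⟩
  · exact hW₀ i
  · rw [show W i j = -W j i from congrFun₂ hW j i, zero_apply, neg_eq_zero]
    exact congrFun h ⟨(j, i), hij⟩

end UpperEntries

section Lyapunov

variable {ι R : Type*} [Fintype ι] [CommRing R] (C : Matrix ι ι R) {W : Matrix ι ι R}

theorem transpose_mul_add_mul_transpose (hW : Wᵀ = -W) :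
    (C * W + W * Cᵀ)ᵀ = -(C * W + W * Cᵀ) := by
  rw [transpose_add, transpose_mul, transpose_mul, transpose_transpose, hW, neg_add,
    Matrix.mul_neg, Matrix.neg_mul, add_comm]

theorem mul_add_mul_transpose_apply_self (hW : Wᵀ = -W) (i : ι) :
    (C * W + W * Cᵀ) i i = 0 := by
  have hW' : ∀ k, W k i = -W i k := fun k => congrFun₂ hW i k
  simp only [add_apply, mul_apply, transpose_apply, hW', ← Finset.sum_add_distrib]
  exact Finset.sum_eq_zero fun k _ => by ring

theorem mul_vecMulVec_add_vecMulVec_mul_transpose {x y : ι → R} {a b : R}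
    (hx : C *ᵥ x = a • x) (hy : C *ᵥ y = b • y) :
    C * vecMulVec x y + vecMulVec x y * Cᵀ = (a + b) • vecMulVec x y := by
  rw [mul_vecMulVec, vecMulVec_mul, vecMul_transpose, hx, hy, smul_vecMulVec, vecMulVec_smul,
    add_smul]

end Lyapunov

theorem vecMulVec_sub_vecMulVec_ne_zero {ι R : Type*} [CommRing R] [Nontrivial R]
    {x y : ι → R} (hxy : LinearIndependent R ![x, y]) : vecMulVec x y - vecMulVec y x ≠ 0 := by
  obtain ⟨j, hj⟩ := Function.ne_iff.mp (hxy.ne_zero 1)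
  intro h
  have hcol : y j • x + -x j • y = 0 := funext fun i => by
    simpa [vecMulVec_apply, mul_comm, ← sub_eq_add_neg] using congrFun₂ h i j
  exact hj (LinearIndependent.pair_iff.mp hxy _ _ hcol).1

section Spectrum

variable {ι : Type*} [Fintype ι] [DecidableEq ι]

theorem spectrum_transpose_s15 {K : Type*} [Field K] (C : Matrix ι ι K) :
    spectrum K Cᵀ = spectrum K C := by
  ext μ
  rw [mem_spectrum_iff_isRoot_charpoly, mem_spectrum_iff_isRoot_charpoly, charpoly_transpose]

open ComplexConjugate in
theorem conj_mem_spectrum_map_algebraMap_s15 {A : Matrix ι ι ℝ} {z : ℂ}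
    (hz : z ∈ spectrum ℂ (A.map (algebraMap ℝ ℂ))) :
    conj z ∈ spectrum ℂ (A.map (algebraMap ℝ ℂ)) := by
  rw [mem_spectrum_iff_isRoot_charpoly, charpoly_map, IsRoot, eval_map_algebraMap] at hz ⊢
  rw [aeval_conj, hz, map_zero]

theorem eq_zero_of_mul_eq_mul_of_disjoint_spectrum_s15 {K : Type*} [Field K] [IsAlgClosed K]
    {C D W : Matrix ι ι K} (hCD : Disjoint (spectrum K C) (spectrum K D))
    (hW : C * W = W * D) : W = 0 := by
  rcases isEmpty_or_nonempty ι
  · exact Subsingleton.elim _ _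
  have hunit : IsUnit (aeval D C.charpoly) := by
    by_contra h
    rw [← spectrum.zero_mem_iff K, spectrum.map_polynomial_aeval_of_nonempty _ _
      (spectrum.nonempty_of_isAlgClosed_of_finiteDimensional K D)] at h
    obtain ⟨μ, hμD, hμ⟩ := h
    exact hCD.ne_of_mem (mem_spectrum_iff_isRoot_charpoly.mpr hμ) hμD rfl
  rw [← hunit.mul_left_eq_zero, ← aeval_mul_eq_mul_aeval hW, aeval_self_charpoly, zero_mul]

end Spectrum

end Matrix

section BialternateSum

variable {n : ℕ}

theorem bialternateSum_map {R S : Type*} [Ring R] [Ring S] (A : Matrix (Fin n) (Fin n) R)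
    (f : R →+* S) : bialternateSum (A.map f) = (bialternateSum A).map f := by
  ext p q
  simp only [bialternateSum, map_apply, map_sub, map_add, apply_ite f, map_zero]

theorem bialternateSum_mulVec_upperEntries {R : Type*} [CommRing R]
    (C W : Matrix (Fin n) (Fin n) R) (hW : Wᵀ = -W) (hW₀ : ∀ i, W i i = 0) :
    bialternateSum C *ᵥ upperEntries W = upperEntries (C * W + W * Cᵀ) := by
  ext ⟨⟨i, j⟩, hij⟩
  have hW' : ∀ r s, W s r = -W r s := fun r s => congrFun₂ hW r s
  -- The two `+` terms of the entry of `bialternateSum C`, weighted by `W`; since `W` is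
  -- alternating, the two `-` terms are `G` at the swapped pair.
  set G : Fin n × Fin n → R := fun p =>
    ((if i = p.1 then C j p.2 else 0) + (if j = p.2 then C i p.1 else 0)) * W p.1 p.2
  calc (bialternateSum C *ᵥ upperEntries W) ⟨(i, j), hij⟩
      = ∑ q : {p : Fin n × Fin n // p.1 < p.2}, (G q + G q.1.swap) := by
        refine Finset.sum_congr rfl fun q _ => ?_
        simp only [bialternateSum, upperEntries, G, Prod.fst_swap, Prod.snd_swap, hW' q.1.1]
        ring
    _ = ∑ p, G p := Fintype.sum_subtype_lt_add_swap G fun r => by simp [G, hW₀]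
    _ = upperEntries (C * W + W * Cᵀ) ⟨(i, j), hij⟩ := by
        simp only [G, upperEntries, Fintype.sum_prod_type, add_mul, ite_mul, zero_mul,
          Finset.sum_add_distrib, Finset.sum_ite_irrel, Finset.sum_const_zero,
          Finset.sum_ite_eq, Finset.mem_univ, if_true, mul_apply, Matrix.add_apply, transpose_apply]
        rw [add_comm]
        exact congrArg _ (Finset.sum_congr rfl fun _ _ => mul_comm _ _)

theorem det_bialternateSum_eq_zero_iff {R : Type*} [CommRing R] [IsDomain R]
    (C : Matrix (Fin n) (Fin n) R) :
    (bialternateSum C).det = 0 ↔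
      ∃ W : Matrix (Fin n) (Fin n) R,
        W ≠ 0 ∧ Wᵀ = -W ∧ (∀ i, W i i = 0) ∧ C * W + W * Cᵀ = 0 := by
  rw [← exists_mulVec_eq_zero_iff]
  constructor
  · rintro ⟨v, hv, hCv⟩
    have hW := transpose_ofUpperEntries v
    refine ⟨ofUpperEntries v, fun h => hv ?_, hW, ofUpperEntries_apply_self v, ?_⟩
    · rw [← upperEntries_ofUpperEntries v, h]
      rfl
    rw [← upperEntries_eq_zero_iff (transpose_mul_add_mul_transpose C hW)
      (mul_add_mul_transpose_apply_self C hW), ← bialternateSum_mulVec_upperEntries C _ hW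
      (ofUpperEntries_apply_self v), upperEntries_ofUpperEntries, hCv]
  · rintro ⟨W, hW0, hW, hW₀, hCW⟩
    refine ⟨upperEntries W, (upperEntries_eq_zero_iff hW hW₀).not.mpr hW0, ?_⟩
    rw [bialternateSum_mulVec_upperEntries C W hW hW₀, hCW]
    rfl

theorem det_bialternateSum_ne_zero_of_forall_re_neg {C : Matrix (Fin n) (Fin n) ℂ}
    (hC : ∀ z ∈ spectrum ℂ C, z.re < 0) : (bialternateSum C).det ≠ 0 := by
  intro hdet
  obtain ⟨W, hW0, -, -, hCW⟩ := (det_bialternateSum_eq_zero_iff C).mp hdet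
  have hdisj : Disjoint (spectrum ℂ C) (spectrum ℂ (-Cᵀ)) := by
    rw [← spectrum.neg_eq, spectrum_transpose_s15]
    refine Set.disjoint_left.mpr fun z hz hz' => ?_
    have := hC (-z) hz'
    rw [Complex.neg_re] at this
    linarith [hC z hz]
  have hsylvester : C * W = W * -Cᵀ := by
    rw [Matrix.mul_neg, eq_neg_of_add_eq_zero_left hCW]
  exact hW0 (eq_zero_of_mul_eq_mul_of_disjoint_spectrum_s15 hdisj hsylvester)

theorem det_bialternateSum_eq_zero_of_mem_spectrum {K : Type*} [Field K]
    {C : Matrix (Fin n) (Fin n) K} {μ : K} (hμ : μ ≠ -μ) (h₁ : μ ∈ spectrum K C)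
    (h₂ : -μ ∈ spectrum K C) : (bialternateSum C).det = 0 := by
  rw [← spectrum_toLin', ← Module.End.hasEigenvalue_iff_mem_spectrum] at h₁ h₂
  obtain ⟨x, hx⟩ := h₁.exists_hasEigenvector
  obtain ⟨y, hy⟩ := h₂.exists_hasEigenvector
  have hxy : LinearIndependent K ![x, y] := by
    refine Module.End.eigenvectors_linearIndependent' (toLin' C) ![μ, -μ] ?_ ![x, y]
      (Fin.forall_fin_two.mpr ⟨hx, hy⟩)
    intro i j
    fin_cases i <;> fin_cases j <;> simp [hμ, hμ.symm]
  have hx' : C *ᵥ x = μ • x := by simpa using hx.apply_eq_smul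
  have hy' : C *ᵥ y = -μ • y := by simpa using hy.apply_eq_smul
  rw [det_bialternateSum_eq_zero_iff]
  refine ⟨vecMulVec x y - vecMulVec y x, vecMulVec_sub_vecMulVec_ne_zero hxy, by simp,
    fun i => by simp [vecMulVec_apply, mul_comm], ?_⟩
  rw [Matrix.mul_sub, Matrix.sub_mul, sub_add_sub_comm,
    mul_vecMulVec_add_vecMulVec_mul_transpose C hx' hy',
    mul_vecMulVec_add_vecMulVec_mul_transpose C hy' hx', add_neg_cancel, neg_add_cancel,
    zero_smul, zero_smul, sub_zero]

end BialternateSum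

theorem det_bialternateSum_guardian_general (n : ℕ)
    (A : Matrix (Fin n) (Fin n) ℝ) :
    ((∀ z : ℂ, (A.charpoly.map (algebraMap ℝ ℂ)).IsRoot z → z.re < 0) →
      (bialternateSum A).det ≠ 0) ∧
    ((∃ β : ℝ, β ≠ 0 ∧ (A.charpoly.map (algebraMap ℝ ℂ)).IsRoot (β * Complex.I)) →
      (bialternateSum A).det = 0) := by
  set C := A.map (algebraMap ℝ ℂ)
  have hspec : ∀ z, (A.charpoly.map (algebraMap ℝ ℂ)).IsRoot z ↔ z ∈ spectrum ℂ C :=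
    fun z => by rw [← charpoly_map, mem_spectrum_iff_isRoot_charpoly]
  have hdet : (bialternateSum C).det = ((bialternateSum A).det : ℂ) := by
    rw [bialternateSum_map, ← RingHom.mapMatrix_apply, ← RingHom.map_det]
    rfl
  refine ⟨fun hneg hA => ?_, fun ⟨β, hβ, hroot⟩ => ?_⟩
  · refine det_bialternateSum_ne_zero_of_forall_re_neg (fun z hz => hneg z ((hspec z).mpr hz)) ?_
    rw [hdet, hA, Complex.ofReal_zero]
  · have h₁ := (hspec _).mp hroot
    have h₂ := conj_mem_spectrum_map_algebraMap_s15 h₁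
    rw [map_mul, Complex.conj_ofReal, Complex.conj_I, mul_neg] at h₂
    have hne : (β * Complex.I : ℂ) ≠ -(β * Complex.I) := by
      rw [Ne, self_eq_neg]
      exact mul_ne_zero (Complex.ofReal_ne_zero.mpr hβ) Complex.I_ne_zero
    exact_mod_cast hdet ▸ det_bialternateSum_eq_zero_of_mem_spectrum hne h₁ h₂

/-- `det(M(A))`, with `M(A)` the bialternate sum of `A` with itself, is a guardian
map in the weak sense: it is nonzero when all complex eigenvalues of `A` have
negative real part, and zero when `A` has a purely imaginary nonzero eigenvalue. -/
theorem det_bialternateSum_guardian (n : ℕ) (hn : 2 ≤ n)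
    (A : Matrix (Fin n) (Fin n) ℝ) :
    ((∀ z : ℂ, (A.charpoly.map (algebraMap ℝ ℂ)).IsRoot z → z.re < 0) →
      (bialternateSum A).det ≠ 0) ∧
    ((∃ β : ℝ, β ≠ 0 ∧ (A.charpoly.map (algebraMap ℝ ℂ)).IsRoot (β * Complex.I)) →
      (bialternateSum A).det = 0) :=
  det_bialternateSum_guardian_general n A
end

section
/- For a complex n×n matrix A (n ≥ 2), let M(A) be the (n choose 2)×(n choose 2) matrix indexed by pairs (i,j) with i < j and (r,s) with r < s, with entries M(A)_{(i,j),(r,s)} := δ_{ir} A_{js} + δ_{js} A_{ir} − δ_{is} A_{jr} − δ_{jr} A_{is}. If λ₁, …, λₙ is an enumeration (with multiplicity) of the roots of the characteristic polynomial of A, then det(M(A)) = ∏_{1≤i<j≤n} (λᵢ + λⱼ). -/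
/-!
Over an algebraically closed field every matrix is similar to an upper-triangular matrix `T` with
the same characteristic polynomial: induct on an invariant hyperplane, the kernel of an
eigenvector of the dual map.

The bialternate sum is the mixed term of the quadratic map `C₂ = secondCompound` (the matrix of
`2 × 2` minors): `M(A) = C₂(1 + A) - C₂(1) - C₂(A)`. Since `C₂` is multiplicative
(Cauchy–Binet for `2 × 2` minors), `M(P T P⁻¹) = C₂(P) M(T) C₂(P)⁻¹`, so
`det M(A) = det M(T)`. For upper-triangular `T` the matrix `M(T)` is upper triangular for the
lexicographic order on pairs, with diagonal entries `T i i + T j j`.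

Finally, `∏_{i<j} (λᵢ + λⱼ)` is the product of the sums of the `2`-element submultisets of
`{λ₁, …, λₙ}`, so it only depends on that multiset, which for `T` is its diagonal.
-/

open Matrix

open Finset Module

theorem Fintype.sum_sum_eq_sum_lt_add_swap {m M : Type*} [Fintype m] [LinearOrder m]
    [AddCommMonoid M] (g : m → m → M) (hg : ∀ a, g a a = 0) :
    ∑ a, ∑ b, g a b = ∑ p : {p : m × m // p.1 < p.2}, (g p.1.1 p.1.2 + g p.1.2 p.1.1) := by
  have hsplit : ∀ x : m × m, g x.1 x.2 =
      (if x.1 < x.2 then g x.1 x.2 else 0) + (if x.2 < x.1 then g x.1 x.2 else 0) := by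
    rintro ⟨a, b⟩
    rcases lt_trichotomy a b with h | rfl | h
    · simp [h, h.not_gt]
    · simp [hg]
    · simp [h, h.not_gt]
  have hswap : ∑ x : m × m, (if x.2 < x.1 then g x.1 x.2 else 0) =
      ∑ x : m × m, (if x.1 < x.2 then g x.2 x.1 else 0) :=
    Fintype.sum_equiv (Equiv.prodComm m m) _ _ fun _ => rfl
  rw [← Fintype.sum_prod_type', Fintype.sum_congr _ _ hsplit, sum_add_distrib, hswap,
    ← sum_filter, ← sum_filter, ← sum_add_distrib]
  exact sum_subtype _ (by simp) _

theorem Fintype.prod_lt_pairs_eq_prod_powersetCard_two {ι R : Type*} [Fintype ι] [LinearOrder ι]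
    [CommMonoid R] (g : Finset ι → R) :
    ∏ p : {p : ι × ι // p.1 < p.2}, g {p.1.1, p.1.2} = ∏ t ∈ univ.powersetCard 2, g t := by
  refine prod_bij (fun p _ => {p.1.1, p.1.2}) (fun p _ => ?_) (fun p _ q _ hpq => ?_)
    (fun t ht => ?_) (fun _ _ => rfl)
  · simp [card_pair p.2.ne]
  · obtain ⟨⟨a, b⟩, hab⟩ := p
    obtain ⟨⟨c, d⟩, hcd⟩ := q
    have := congrArg ((↑) : Finset ι → Set ι) hpq
    rw [coe_pair, coe_pair, Set.pair_eq_pair_iff] at this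
    rcases this with ⟨rfl, rfl⟩ | ⟨rfl, rfl⟩
    · rfl
    · exact absurd (hab.trans hcd) (lt_irrefl a)
  · obtain ⟨a, b, hab, rfl⟩ := card_eq_two.mp (mem_powersetCard_univ.mp ht)
    rcases hab.lt_or_gt with h | h
    · exact ⟨⟨(a, b), h⟩, mem_univ _, rfl⟩
    · exact ⟨⟨(b, a), h⟩, mem_univ _, pair_comm b a⟩

theorem Fintype.prod_lt_pairs_add_eq_prod_powersetCard {ι R : Type*} [Fintype ι] [LinearOrder ι]
    [CommSemiring R] (f : ι → R) :
    ∏ p : {p : ι × ι // p.1 < p.2}, (f p.1.1 + f p.1.2) =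
      (((univ.val.map f).powersetCard 2).map Multiset.sum).prod := by
  rw [Multiset.powersetCard_map, ← map_val_val_powersetCard, Multiset.map_map, Multiset.map_map]
  change _ = ∏ t ∈ univ.powersetCard 2, ∑ i ∈ t, f i
  rw [← Fintype.prod_lt_pairs_eq_prod_powersetCard_two]
  exact Fintype.prod_congr _ _ fun p => (sum_pair p.2.ne).symm

namespace Matrix

section SecondCompound

variable {m R : Type*} [LinearOrder m] [CommRing R]

def secondCompound (A : Matrix m m R) :
    Matrix {p : m × m // p.1 < p.2} {p : m × m // p.1 < p.2} R :=
  of fun p q => A p.1.1 q.1.1 * A p.1.2 q.1.2 - A p.1.1 q.1.2 * A p.1.2 q.1.1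

@[simp]
theorem secondCompound_one : secondCompound (1 : Matrix m m R) = 1 := by
  ext ⟨⟨i, j⟩, hij⟩ ⟨⟨r, s⟩, hrs⟩
  simp only [secondCompound, of_apply, one_apply, Subtype.mk.injEq, Prod.mk.injEq]
  have : ¬ (i = s ∧ j = r) := by rintro ⟨rfl, rfl⟩; exact lt_asymm hij hrs
  split_ifs <;> simp_all

theorem secondCompound_mul [Fintype m] (X Y : Matrix m m R) :
    secondCompound (X * Y) = secondCompound X * secondCompound Y := by
  ext ⟨⟨i, j⟩, hij⟩ ⟨⟨r, s⟩, hrs⟩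
  let g a b := X i a * X j b * (Y a r * Y b s - Y a s * Y b r)
  calc secondCompound (X * Y) ⟨(i, j), hij⟩ ⟨(r, s), hrs⟩ = ∑ a, ∑ b, g a b := by
        simp only [secondCompound, of_apply, mul_apply, sum_mul_sum, ← sum_sub_distrib, g]
        exact Fintype.sum_congr _ _ fun a => Fintype.sum_congr _ _ fun b => by ring
    _ = ∑ p : {p : m × m // p.1 < p.2}, (g p.1.1 p.1.2 + g p.1.2 p.1.1) :=
        Fintype.sum_sum_eq_sum_lt_add_swap g fun a => by ring
    _ = _ := by
        simp only [mul_apply, secondCompound, of_apply, g]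
        exact Fintype.sum_congr _ _ fun p => by ring

end SecondCompound

theorem BlockTriangular.det_eq_prod_diag {m α R : Type*} [CommRing R] [Fintype m]
    [DecidableEq m] [LinearOrder α] {M : Matrix m m R} {b : m → α} (h : M.BlockTriangular b)
    (hb : Function.Injective b) : M.det = ∏ i, M i i := by
  let : LinearOrder m := LinearOrder.lift' b hb
  exact det_of_isUpperTriangular h

theorem roots_charpoly_of_isUpperTriangular {m R : Type*} [CommRing R] [IsDomain R] [Fintype m]
    [DecidableEq m] [LinearOrder m] {T : Matrix m m R} (hT : T.IsUpperTriangular) :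
    T.charpoly.roots = univ.val.map fun i => T i i := by
  rw [charpoly_of_isUpperTriangular T hT, prod_eq_multiset_prod,
    ← Polynomial.roots_multiset_prod_X_sub_C (univ.val.map fun i => T i i), Multiset.map_map]
  rfl

end Matrix

section Triangularization

variable {K : Type*} [Field K]

theorem Module.End.exists_dual_ne_zero_mapsTo_ker {V : Type*} [AddCommGroup V] [Module K V]
    [IsAlgClosed K] [FiniteDimensional K V] [Nontrivial V] (f : End K V) :
    ∃ φ : Dual K V, φ ≠ 0 ∧ ∀ x ∈ LinearMap.ker φ, f x ∈ LinearMap.ker φ := by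
  obtain ⟨μ, hμ⟩ := Module.End.exists_eigenvalue f.dualMap
  obtain ⟨φ, hφ, hφ0⟩ := hμ.exists_hasEigenvector
  refine ⟨φ, hφ0, fun x hx => ?_⟩
  have hφx : φ (f x) = μ * φ x := by
    simpa using LinearMap.congr_fun (Module.End.mem_eigenspace_iff.mp hφ) x
  simp_all

theorem Module.Basis.repr_mkFinSnoc_coe {R M : Type*} [Ring R] [AddCommGroup M] [Module R M]
    {n : ℕ} {N : Submodule R M} (b : Basis (Fin n) R N) (y : M)
    (hli : ∀ (c : R), ∀ x ∈ N, c • y + x = 0 → c = 0)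
    (hsp : ∀ z : M, ∃ c : R, z + c • y ∈ N) (x : N) :
    ⇑((mkFinSnoc b y hli hsp).repr x) = Fin.snoc (b.repr x) 0 := by
  rw [← (mkFinSnoc b y hli hsp).repr_sum_self (Fin.snoc (b.repr x) 0)]
  congr 2
  simp only [coe_mkFinSnoc, Fin.sum_univ_castSucc, Fin.snoc_castSucc, Fin.snoc_last, zero_smul,
    add_zero, Function.comp_apply]
  have := congrArg N.subtype (b.sum_repr x).symm
  rwa [map_sum] at this

open Module.Basis in
theorem LinearMap.toMatrix_mkFinSnoc_isUpperTriangular {V : Type*} [AddCommGroup V]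
    [Module K V] {n : ℕ} {N : Submodule K V} (f : Module.End K V)
    (hf : ∀ x ∈ N, f x ∈ N) (b : Basis (Fin n) K N)
    (hb : (toMatrix b b (f.restrict hf)).IsUpperTriangular) (y : V)
    (hli : ∀ (c : K), ∀ x ∈ N, c • y + x = 0 → c = 0)
    (hsp : ∀ z : V, ∃ c : K, z + c • y ∈ N) :
    (toMatrix (mkFinSnoc b y hli hsp) (mkFinSnoc b y hli hsp) f).IsUpperTriangular := by
  intro i j hji
  obtain ⟨j, rfl⟩ := Fin.exists_castSucc_eq.mpr (Fin.ne_last_of_lt hji)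
  have hfb : f (mkFinSnoc b y hli hsp j.castSucc) = f.restrict hf (b j) := by simp
  rw [toMatrix_apply, hfb, repr_mkFinSnoc_coe]
  induction i using Fin.lastCases with
  | last => simp
  | cast i =>
    rw [Fin.snoc_castSucc, ← toMatrix_apply]
    exact hb (by simpa using hji)

theorem Module.End.exists_basis_isUpperTriangular_toMatrix [IsAlgClosed K] (n : ℕ) :
    ∀ {V : Type*} [AddCommGroup V] [Module K V] [FiniteDimensional K V], finrank K V = n →
      ∀ f : Module.End K V, ∃ b : Basis (Fin n) K V,
        (LinearMap.toMatrix b b f).IsUpperTriangular := by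
  induction n with
  | zero =>
    intro V _ _ _ hV f
    exact ⟨Module.finBasisOfFinrankEq K V hV, fun i => Fin.elim0 i⟩
  | succ n ih =>
    intro V _ _ _ hV f
    have : Nontrivial V := Module.nontrivial_of_finrank_eq_succ hV
    obtain ⟨φ, hφ, hf⟩ := f.exists_dual_ne_zero_mapsTo_ker
    obtain ⟨y, hy⟩ : ∃ y, φ y ≠ 0 := by simpa [DFunLike.ext_iff] using hφ
    have hN : finrank K (LinearMap.ker φ) = n := by
      have := Module.Dual.finrank_ker_add_one_of_ne_zero hφ
      omega
    obtain ⟨b, hb⟩ := ih hN (f.restrict hf)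
    have hli : ∀ (c : K), ∀ x ∈ LinearMap.ker φ, c • y + x = 0 → c = 0 := by
      intro c x hx hcx
      simpa [hy, LinearMap.mem_ker.mp hx] using congrArg φ hcx
    have hsp : ∀ z : V, ∃ c : K, z + c • y ∈ LinearMap.ker φ :=
      fun z => ⟨-φ z / φ y, by simp [div_mul_cancel₀ _ hy]⟩
    exact ⟨_, LinearMap.toMatrix_mkFinSnoc_isUpperTriangular f hf b hb y hli hsp⟩

theorem Matrix.exists_eq_mul_isUpperTriangular_mul [IsAlgClosed K] {n : ℕ}
    (A : Matrix (Fin n) (Fin n) K) :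
    ∃ P Q T : Matrix (Fin n) (Fin n) K, P * Q = 1 ∧ A = P * T * Q ∧ T.IsUpperTriangular ∧
      T.charpoly = A.charpoly := by
  obtain ⟨b, hb⟩ := Module.End.exists_basis_isUpperTriangular_toMatrix n (by simp) (toLin' A)
  let c := Pi.basisFun K (Fin n)
  refine ⟨c.toMatrix b, b.toMatrix c, LinearMap.toMatrix b b (toLin' A),
    c.toMatrix_mul_toMatrix_flip b, ?_, hb, ?_⟩
  · rw [basis_toMatrix_mul_linearMap_toMatrix_mul_basis_toMatrix, LinearMap.toMatrix_eq_toMatrix',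
      LinearMap.toMatrix'_toLin']
  · rw [LinearMap.charpoly_toMatrix, Matrix.charpoly_toLin']

end Triangularization

section BialternateSum

variable {n : ℕ} {R : Type*}

theorem bialternateSum_eq_secondCompound [CommRing R] (A : Matrix (Fin n) (Fin n) R) :
    bialternateSum A = secondCompound (1 + A) - secondCompound 1 - secondCompound A := by
  ext p q
  simp only [bialternateSum, secondCompound, Matrix.sub_apply, Matrix.add_apply, one_apply,
    of_apply]
  split_ifs <;> ring

theorem bialternateSum_mul_mul [CommRing R] {X Y : Matrix (Fin n) (Fin n) R} (hXY : X * Y = 1)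
    (A : Matrix (Fin n) (Fin n) R) :
    bialternateSum (X * A * Y) = secondCompound X * bialternateSum A * secondCompound Y := by
  have hconj : ∀ B, secondCompound (X * B * Y) =
      secondCompound X * secondCompound B * secondCompound Y :=
    fun B => by rw [secondCompound_mul, secondCompound_mul]
  have h1 : 1 + X * A * Y = X * (1 + A) * Y := by
    rw [Matrix.mul_add, Matrix.add_mul, Matrix.mul_one, hXY]
  have h2 : secondCompound (1 : Matrix (Fin n) (Fin n) R) =
      secondCompound X * secondCompound 1 * secondCompound Y := by
    rw [← hconj, Matrix.mul_one, hXY]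
  rw [bialternateSum_eq_secondCompound, bialternateSum_eq_secondCompound, h1, hconj, hconj]
  conv_lhs => rw [h2]
  simp only [Matrix.mul_sub, Matrix.sub_mul]

theorem det_bialternateSum_mul_mul [CommRing R] {X Y : Matrix (Fin n) (Fin n) R}
    (hXY : X * Y = 1) (A : Matrix (Fin n) (Fin n) R) :
    (bialternateSum (X * A * Y)).det = (bialternateSum A).det := by
  have hdet : (secondCompound X).det * (secondCompound Y).det = 1 := by
    rw [← det_mul, ← secondCompound_mul, hXY, secondCompound_one, det_one]
  rw [bialternateSum_mul_mul hXY, det_mul, det_mul, mul_right_comm, hdet, one_mul]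

theorem bialternateSum_blockTriangular_toLex [Ring R] {T : Matrix (Fin n) (Fin n) R}
    (hT : T.IsUpperTriangular) : (bialternateSum T).BlockTriangular fun p => toLex p.1 := by
  rintro ⟨⟨i, j⟩, hij⟩ ⟨⟨r, s⟩, hrs⟩ hlt
  simp only [Prod.Lex.toLex_lt_toLex] at hlt
  simp only at hij hrs
  simp only [bialternateSum]
  have hT' : ∀ {a b}, b < a → T a b = 0 := fun h => hT h
  rcases hlt with hri | ⟨rfl, hsj⟩
  · simp [hri.ne', (hri.trans hij).ne', hT' hri, hT' (hri.trans hij)]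
  · simp [hsj.ne', hrs.ne, hij.ne', hT' hsj]

theorem bialternateSum_apply_self [Ring R] (T : Matrix (Fin n) (Fin n) R)
    (p : {p : Fin n × Fin n // p.1 < p.2}) :
    bialternateSum T p p = T p.1.1 p.1.1 + T p.1.2 p.1.2 := by
  simp [bialternateSum, p.2.ne, p.2.ne', add_comm]

theorem det_bialternateSum_of_isUpperTriangular [CommRing R] {T : Matrix (Fin n) (Fin n) R}
    (hT : T.IsUpperTriangular) :
    (bialternateSum T).det =
      ∏ p : {p : Fin n × Fin n // p.1 < p.2}, (T p.1.1 p.1.1 + T p.1.2 p.1.2) := by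
  rw [(bialternateSum_blockTriangular_toLex hT).det_eq_prod_diag
    (toLex.injective.comp Subtype.val_injective)]
  simp only [bialternateSum_apply_self]

end BialternateSum

theorem det_bialternateSum_eq_prod_general (n : ℕ)
    (A : Matrix (Fin n) (Fin n) ℂ) (lam : Fin n → ℂ)
    (h : A.charpoly.roots = Multiset.map lam Finset.univ.val) :
    (bialternateSum A).det =
      ∏ p : {p : Fin n × Fin n // p.1 < p.2}, (lam p.val.1 + lam p.val.2) := by
  obtain ⟨P, Q, T, hPQ, rfl, hT, hchar⟩ := A.exists_eq_mul_isUpperTriangular_mul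
  rw [det_bialternateSum_mul_mul hPQ, det_bialternateSum_of_isUpperTriangular hT,
    Fintype.prod_lt_pairs_add_eq_prod_powersetCard fun i => T i i,
    Fintype.prod_lt_pairs_add_eq_prod_powersetCard, ← h, ← hchar,
    roots_charpoly_of_isUpperTriangular hT]

/-- If `λ₁, …, λₙ` enumerates (with multiplicity) the roots of the characteristic
polynomial of a complex `n × n` matrix `A`, then the determinant of the
bialternate sum of `A` with itself equals `∏_{i<j} (λᵢ + λⱼ)`. -/
theorem det_bialternateSum_eq_prod (n : ℕ) (hn : 2 ≤ n)
    (A : Matrix (Fin n) (Fin n) ℂ) (lam : Fin n → ℂ)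
    (h : A.charpoly.roots = Multiset.map lam Finset.univ.val) :
    (bialternateSum A).det =
      ∏ p : {p : Fin n × Fin n // p.1 < p.2}, (lam p.val.1 + lam p.val.2) :=
  det_bialternateSum_eq_prod_general n A lam h
end
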